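/- Let n be a nonzero integer. Then ∫₀¹dj₁ ∫₀^{1−j₁}dj₂ (j₂ e^{2πin j₃} + j₃ e^{−2πin j₂} + j₁)·|1 − e^{2πin j₁}|², where j₃ = 1 − j₁ − j₂, equals 1/3 + 5/(2π²n²). -/

import Mathlib

open Real Complex intervalIntegral

lemma habs (n : ℤ) (x : ℝ) :
    (‖1 - Complex.exp (2 * (Real.pi : ℂ) * Complex.I * n * x)‖)^2
      = 2 - 2 * Real.cos (2*Real.pi*n*x) := by
  set y : ℝ := 2*Real.pi*n*x with hy
  rw [Complex.sq_norm, show (2 * (Real.pi : ℂ) * Complex.I * n * x) = (y : ℂ) * Complex.I by rw [hy]; push_cast; ring,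
    Complex.exp_mul_I, ← Complex.ofReal_cos, ← Complex.ofReal_sin,
    show (1 : ℂ) - ((Real.cos y : ℂ) + (Real.sin y : ℂ) * Complex.I)
      = ((1 - Real.cos y : ℝ) : ℂ) + ((-Real.sin y : ℝ) : ℂ) * Complex.I by push_cast; ring,
    Complex.normSq_add_mul_I]
  nlinarith [Real.sin_sq_add_cos_sq y]

lemma inner_eval (n : ℤ) (hn : n ≠ 0) (j₁ : ℝ) :
    (∫ j₂ in (0:ℝ)..(1 - j₁),
        ((j₂ : ℂ) * Complex.exp (2 * (Real.pi : ℂ) * Complex.I * (n : ℂ) * ((1 - j₁ - j₂ : ℝ) : ℂ))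
          + ((1 - j₁ - j₂ : ℝ) : ℂ) * Complex.exp (-(2 * (Real.pi : ℂ) * Complex.I * (n : ℂ) * (j₂ : ℂ)))
          + (j₁ : ℂ)))
      = ((j₁ * (1 - j₁) + (2 - 2 * Real.cos (2*Real.pi*n*j₁)) / (4*Real.pi^2*(n:ℝ)^2) : ℝ) : ℂ) := by
  set w : ℂ := 2 * (Real.pi : ℂ) * Complex.I * n with hwdef
  have hw : w ≠ 0 := by
    simp [hwdef, Complex.ext_iff, Real.pi_ne_zero, Complex.I_ne_zero, hn]
  have hw2 : w^2 = -(((4*Real.pi^2*(n:ℝ)^2) : ℝ) : ℂ) := by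
    rw [hwdef]; push_cast
    rw [mul_pow, mul_pow, mul_pow, Complex.I_sq]; ring
  have hexpw : Complex.exp w = 1 := by
    rw [hwdef, show (2 * (Real.pi : ℂ) * Complex.I * n) = (n:ℂ) * (2 * (Real.pi:ℂ) * Complex.I) by ring]
    exact Complex.exp_int_mul_two_pi_mul_I n
  have ecos : Complex.exp (w * (j₁:ℂ)) + Complex.exp (-(w * (j₁:ℂ)))
      = ((2 * Real.cos (2*Real.pi*n*j₁) : ℝ) : ℂ) := by
    rw [show w * (j₁:ℂ) = ((2*Real.pi*(n:ℝ)*j₁ : ℝ) : ℂ) * Complex.I by rw [hwdef]; push_cast; ring,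
      show -(((2*Real.pi*(n:ℝ)*j₁ : ℝ) : ℂ) * Complex.I) = ((-(2*Real.pi*(n:ℝ)*j₁) : ℝ) : ℂ) * Complex.I by push_cast; ring,
      Complex.exp_mul_I, Complex.exp_mul_I]
    simp only [← Complex.ofReal_cos, ← Complex.ofReal_sin, Real.cos_neg, Real.sin_neg]
    push_cast
    ring
  clear_value w
  clear hwdef
  set u : ℂ := w⁻¹ with hudef
  have hu : w * u = 1 := mul_inv_cancel₀ hw
  clear_value u
  clear hudef
  set c : ℂ := ((1 - j₁ : ℝ) : ℂ) with hc
  set G : ℝ → ℂ := fun t => Complex.exp (w*(c-(t:ℂ))) * (-((t:ℂ)*u) - u^2)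
      + Complex.exp (-(w*(t:ℂ))) * ((t:ℂ)*u + u^2 - c*u) + (j₁:ℂ)*(t:ℂ) with hG
  have hderiv : ∀ t : ℝ, HasDerivAt G
      ((t : ℂ) * Complex.exp (w * ((1 - j₁ - t : ℝ) : ℂ))
        + ((1 - j₁ - t : ℝ) : ℂ) * Complex.exp (-(w * (t:ℂ))) + (j₁:ℂ)) t := by
    intro t
    have hF : ∀ z : ℂ, HasDerivAt (fun z : ℂ => Complex.exp (w*(c-z)) * (-(z*u) - u^2)
        + Complex.exp (-(w*z)) * (z*u + u^2 - c*u) + (j₁:ℂ)*z)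
        (z * Complex.exp (w*(c-z)) + (c-z) * Complex.exp (-(w*z)) + (j₁:ℂ)) z := by
      intro z
      have h0 : HasDerivAt (fun z : ℂ => w*(c-z)) (-w) z := by
        simpa using ((hasDerivAt_id z).const_sub c).const_mul w
      have h1 : HasDerivAt (fun z : ℂ => -(w*z)) (-w) z := by
        simpa using ((hasDerivAt_id z).const_mul (-w))
      have h2 : HasDerivAt (fun z : ℂ => -(z*u) - u^2) (-u) z := by
        simpa using ((hasDerivAt_id z).mul_const u).neg.sub_const (u^2)
      have h3 : HasDerivAt (fun z : ℂ => z*u + u^2 - c*u) u z := by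
        simpa using (((hasDerivAt_id z).mul_const u).add_const (u^2)).sub_const (c*u)
      have h4 : HasDerivAt (fun z : ℂ => (j₁:ℂ)*z) (j₁:ℂ) z := by
        simpa using (hasDerivAt_id z).const_mul (j₁:ℂ)
      have := ((h0.cexp.mul h2).add (h1.cexp.mul h3)).add h4
      refine this.congr_deriv (Eq.symm ?_)
      linear_combination -(Complex.exp (w*(c-z)) * (z+u) + Complex.exp (-(w*z)) * (c-z-u)) * hu
    have := (hF (t:ℂ)).comp_ofReal
    have harg : w * ((1 - j₁ - t : ℝ) : ℂ) = w * (c - (t:ℂ)) := by rw [hc]; push_cast; ring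
    have harg2 : ((1 - j₁ - t : ℝ) : ℂ) = c - (t:ℂ) := by rw [hc]; push_cast; ring
    rw [harg, harg2]
    exact this
  have hcont : Continuous (fun t : ℝ => (t : ℂ) * Complex.exp (w * ((1 - j₁ - t : ℝ) : ℂ))
        + ((1 - j₁ - t : ℝ) : ℂ) * Complex.exp (-(w * (t:ℂ))) + (j₁:ℂ)) := by
    fun_prop
  rw [intervalIntegral.integral_eq_sub_of_hasDerivAt (fun t _ => hderiv t)
    (hcont.intervalIntegrable _ _)]
  have e1 : Complex.exp (w*(c-((1-j₁:ℝ):ℂ))) = 1 := by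
    rw [hc]; simp
  have e2 : Complex.exp (w*c) = Complex.exp (-(w*(j₁:ℂ))) := by
    rw [hc, show w*(((1 - j₁ : ℝ)):ℂ) = w + -(w*(j₁:ℂ)) by push_cast; ring,
      Complex.exp_add, hexpw, one_mul]
  have e3 : Complex.exp (-(w*((1-j₁:ℝ):ℂ))) = Complex.exp (w*(j₁:ℂ)) := by
    rw [show -(w*(((1 - j₁ : ℝ)):ℂ)) = -w + w*(j₁:ℂ) by push_cast; ring,
      Complex.exp_add, Complex.exp_neg, hexpw, inv_one, one_mul]
  have hXY : Complex.exp (w*(j₁:ℂ)) = ((2 * Real.cos (2*Real.pi*n*j₁) : ℝ) : ℂ)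
      - Complex.exp (-(w*(j₁:ℂ))) := eq_sub_of_add_eq ecos
  have hpin : (4*Real.pi^2*(n:ℝ)^2) ≠ 0 := by
    have h1 := Real.pi_ne_zero
    have h2 : (n:ℝ) ≠ 0 := Int.cast_ne_zero.mpr hn
    positivity
  rw [hG]
  simp only [Complex.ofReal_zero, mul_zero, zero_mul, Complex.exp_zero, sub_zero, zero_add,
    neg_zero, zero_sub]
  rw [e1, e2, e3, hXY, hc]
  push_cast
  have hpinC : (4*(Real.pi:ℂ)^2*(n:ℂ)^2) ≠ 0 := by
    exact mul_ne_zero (mul_ne_zero (by norm_num : (4:ℂ) ≠ 0) (pow_ne_zero _ (Complex.ofReal_ne_zero.mpr Real.pi_ne_zero))) (pow_ne_zero _ (Int.cast_ne_zero.mpr hn))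
  have hp1 : (4*(Real.pi:ℂ)^2*(n:ℂ)^2) * (4*(Real.pi:ℂ)^2*(n:ℂ)^2)⁻¹ = 1 := mul_inv_cancel₀ hpinC
  have hw2C : w^2 = -(4*(Real.pi:ℂ)^2*(n:ℂ)^2) := by rw [hw2]; push_cast; ring
  linear_combination (-(2*Complex.cos (2*(Real.pi:ℂ)*(n:ℂ)*(j₁:ℂ))-2)*u^2) * hp1
    + ((2*Complex.cos (2*(Real.pi:ℂ)*(n:ℂ)*(j₁:ℂ))-2)*(4*(Real.pi:ℂ)^2*(n:ℂ)^2)⁻¹*u^2) * hw2C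
    - ((2*Complex.cos (2*(Real.pi:ℂ)*(n:ℂ)*(j₁:ℂ))-2)*(4*(Real.pi:ℂ)^2*(n:ℂ)^2)⁻¹*(w*u+1)) * hu

lemma outer_eval (n : ℤ) (hn : n ≠ 0) :
    (∫ t in (0:ℝ)..1,
        (t * (1 - t) + (2 - 2 * Real.cos (2*Real.pi*n*t)) / (4*Real.pi^2*(n:ℝ)^2))
          * (2 - 2 * Real.cos (2*Real.pi*n*t)))
      = 1/3 + 5/(2*Real.pi^2*(n:ℝ)^2) := by
  have hn' : (n:ℝ) ≠ 0 := Int.cast_ne_zero.mpr hn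
  have hπ := Real.pi_ne_zero
  set ω : ℝ := 2*Real.pi*(n:ℝ) with hωdef
  have hω0 : ω ≠ 0 := by rw [hωdef]; simp [hn', hπ]
  have hω2 : ω^2 = 4*Real.pi^2*(n:ℝ)^2 := by rw [hωdef]; ring
  have hsin1 : Real.sin ω = 0 := by
    rw [show ω = ((2*n : ℤ):ℝ)*Real.pi by rw [hωdef]; push_cast; ring]
    exact Real.sin_int_mul_pi _
  have hcos1 : Real.cos ω = 1 := by
    rw [show ω = ((n : ℤ):ℝ)*(2*Real.pi) by rw [hωdef]; push_cast; ring]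
    exact Real.cos_int_mul_two_pi _
  have hsin2 : Real.sin (2*ω) = 0 := by
    rw [show 2*ω = ((4*n : ℤ):ℝ)*Real.pi by rw [hωdef]; push_cast; ring]
    exact Real.sin_int_mul_pi _
  have hsin2' : Real.sin (ω*2) = 0 := by rw [mul_comm]; exact hsin2
  clear_value ω
  set F : ℝ → ℝ := fun t => t^2 - 2/3*t^3 + (2*t^2 - 2*t)*Real.sin (ω*t)/ω
      + (4*t - 2)*Real.cos (ω*t)/ω^2 - 12*Real.sin (ω*t)/ω^3 + 6*t/ω^2
      + Real.sin (2*(ω*t))/ω^3 with hF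
  have hderiv : ∀ t : ℝ, HasDerivAt F
      ((t * (1 - t) + (2 - 2 * Real.cos (ω*t)) / (ω^2)) * (2 - 2 * Real.cos (ω*t))) t := by
    intro t
    have hid : HasDerivAt (fun t : ℝ => ω*t) ω t := by
      simpa using (hasDerivAt_id t).const_mul ω
    have hid2 : HasDerivAt (fun t : ℝ => 2*(ω*t)) (2*ω) t := by
      simpa [mul_assoc] using (hasDerivAt_id t).const_mul (2*ω)
    have hs := hid.sin
    have hc := hid.cos
    have hs2 := hid2.sin
    have hpoly1 : HasDerivAt (fun t : ℝ => t^2 - 2/3*t^3) (2*t - 2*t^2) t := by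
      have := (hasDerivAt_pow 2 t).sub ((hasDerivAt_pow 3 t).const_mul (2/3:ℝ))
      refine this.congr_deriv (Eq.symm ?_); ring
    have hpoly2 : HasDerivAt (fun t : ℝ => 2*t^2 - 2*t) (4*t - 2) t := by
      have := ((hasDerivAt_pow 2 t).const_mul (2:ℝ)).sub ((hasDerivAt_id t).const_mul (2:ℝ))
      refine this.congr_deriv (Eq.symm ?_); ring
    have hpoly3 : HasDerivAt (fun t : ℝ => 4*t - 2) 4 t := by
      simpa using ((hasDerivAt_id t).const_mul (4:ℝ)).sub_const (2:ℝ)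
    have h6 : HasDerivAt (fun t : ℝ => 6*t/ω^2) (6/ω^2) t := by
      simpa [mul_div_assoc] using (((hasDerivAt_id t).const_mul (6:ℝ)).div_const (ω^2))
    have hT2 : HasDerivAt (fun t : ℝ => (2*t^2 - 2*t)*Real.sin (ω*t)/ω)
        (((4*t - 2)*Real.sin (ω*t) + (2*t^2 - 2*t)*(Real.cos (ω*t)*ω))/ω) t :=
      (hpoly2.mul hs).div_const ω
    have hT3 : HasDerivAt (fun t : ℝ => (4*t - 2)*Real.cos (ω*t)/ω^2)
        ((4*Real.cos (ω*t) + (4*t - 2)*(-Real.sin (ω*t)*ω))/ω^2) t :=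
      (hpoly3.mul hc).div_const (ω^2)
    have hT4 : HasDerivAt (fun t : ℝ => 12*Real.sin (ω*t)/ω^3)
        (12*(Real.cos (ω*t)*ω)/ω^3) t := by
      simpa [mul_div_assoc] using (hs.const_mul (12:ℝ)).div_const (ω^3)
    have hT5 : HasDerivAt (fun t : ℝ => Real.sin (2*(ω*t))/ω^3)
        ((Real.cos (2*(ω*t))*(2*ω))/ω^3) t := hs2.div_const (ω^3)
    have := ((((hpoly1.add hT2).add hT3).sub hT4).add h6).add hT5
    refine this.congr_deriv (Eq.symm ?_)
    rw [Real.cos_two_mul]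
    field_simp
    ring
  have hcont : Continuous (fun t : ℝ =>
      (t * (1 - t) + (2 - 2 * Real.cos (ω*t)) / (ω^2)) * (2 - 2 * Real.cos (ω*t))) := by
    fun_prop
  have key : (∫ t in (0:ℝ)..1,
      (t * (1 - t) + (2 - 2 * Real.cos (ω*t)) / (ω^2)) * (2 - 2 * Real.cos (ω*t))) = F 1 - F 0 :=
    intervalIntegral.integral_eq_sub_of_hasDerivAt (fun t _ => hderiv t)
      (hcont.intervalIntegrable _ _)
  simp only [← hω2]
  rw [key, hF]
  simp only [mul_one, mul_zero, Real.sin_zero, Real.cos_zero, hsin1, hcos1, hsin2, hsin2']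
  rw [hω2]
  field_simp
  ring

theorem non_nearest_integral (n : ℤ) (hn : n ≠ 0) :
    (∫ j₁ in (0:ℝ)..1, ∫ j₂ in (0:ℝ)..(1 - j₁),
        ((j₂ : ℂ) * Complex.exp (2 * (Real.pi : ℂ) * Complex.I * (n : ℂ) * ((1 - j₁ - j₂ : ℝ) : ℂ))
          + ((1 - j₁ - j₂ : ℝ) : ℂ) * Complex.exp (-(2 * (Real.pi : ℂ) * Complex.I * (n : ℂ) * (j₂ : ℂ)))
          + (j₁ : ℂ))
        * ((‖1 - Complex.exp (2 * (Real.pi : ℂ) * Complex.I * (n : ℂ) * (j₁ : ℂ))‖ ^ 2 : ℝ) : ℂ))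
      = ((1 / 3 + 5 / (2 * Real.pi ^ 2 * (n : ℝ) ^ 2) : ℝ) : ℂ) := by
  have step : ∀ j₁ : ℝ, (∫ j₂ in (0:ℝ)..(1 - j₁),
        ((j₂ : ℂ) * Complex.exp (2 * (Real.pi : ℂ) * Complex.I * (n : ℂ) * ((1 - j₁ - j₂ : ℝ) : ℂ))
          + ((1 - j₁ - j₂ : ℝ) : ℂ) * Complex.exp (-(2 * (Real.pi : ℂ) * Complex.I * (n : ℂ) * (j₂ : ℂ)))
          + (j₁ : ℂ))
        * ((‖1 - Complex.exp (2 * (Real.pi : ℂ) * Complex.I * (n : ℂ) * (j₁ : ℂ))‖ ^ 2 : ℝ) : ℂ))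
      = (((j₁ * (1 - j₁) + (2 - 2 * Real.cos (2*Real.pi*n*j₁)) / (4*Real.pi^2*(n:ℝ)^2))
          * (2 - 2 * Real.cos (2*Real.pi*n*j₁)) : ℝ) : ℂ) := by
    intro j₁
    rw [intervalIntegral.integral_mul_const, inner_eval n hn j₁, habs n j₁]
    push_cast
    ring
  calc (∫ j₁ in (0:ℝ)..1, ∫ j₂ in (0:ℝ)..(1 - j₁),
        ((j₂ : ℂ) * Complex.exp (2 * (Real.pi : ℂ) * Complex.I * (n : ℂ) * ((1 - j₁ - j₂ : ℝ) : ℂ))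
          + ((1 - j₁ - j₂ : ℝ) : ℂ) * Complex.exp (-(2 * (Real.pi : ℂ) * Complex.I * (n : ℂ) * (j₂ : ℂ)))
          + (j₁ : ℂ))
        * ((‖1 - Complex.exp (2 * (Real.pi : ℂ) * Complex.I * (n : ℂ) * (j₁ : ℂ))‖ ^ 2 : ℝ) : ℂ))
      = ∫ j₁ in (0:ℝ)..1, (((j₁ * (1 - j₁) + (2 - 2 * Real.cos (2*Real.pi*n*j₁)) / (4*Real.pi^2*(n:ℝ)^2))
          * (2 - 2 * Real.cos (2*Real.pi*n*j₁)) : ℝ) : ℂ) := by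
        exact intervalIntegral.integral_congr (fun j₁ _ => step j₁)
    _ = (((∫ j₁ in (0:ℝ)..1, (j₁ * (1 - j₁) + (2 - 2 * Real.cos (2*Real.pi*n*j₁)) / (4*Real.pi^2*(n:ℝ)^2))
          * (2 - 2 * Real.cos (2*Real.pi*n*j₁))) : ℝ) : ℂ) := intervalIntegral.integral_ofReal
    _ = ((1 / 3 + 5 / (2 * Real.pi ^ 2 * (n : ℝ) ^ 2) : ℝ) : ℂ) := by
        rw [outer_eval n hn]
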